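/- Let φ(k)² = 3 + 2cos(k·v₁) + 2cos(k·v₂) + 2cos(k·(v₁−v₂)) with v₁ = (√3/2,1/2), v₂ = (√3/2,−1/2), and K⋆ = (0, 4π/3). Then as k → 0, φ(K⋆+k)² = (3/4)|k|² + (3√3/8)k₁²k₂ − (√3/8)k₂³ − (3/64)|k|⁴ + O(|k|⁵). -/

import Mathlib

open Real Asymptotics Filter Topology

/-!
Writing `a = (√3 k₁ + k₂)/2`, `b = (√3 k₁ - k₂)/2`, `c = k₂`, the angle-addition formulas turn
`φ(K⋆ + k)²` into `3 - (cos a + cos b + cos c) - √3 (sin a - sin b - sin c)`. Replacing `cos` and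
`sin` by their Taylor polynomials of degree 4 and 3 (both read off the degree-4 partial sum of
`exp (x i)`) gives exactly the stated polynomial once `√3² = 3` is used; the six remainders are
`O(x⁵)` and `a, b, c = O(|k|)`.
-/

noncomputable def phiSqDirac (k : ℝ × ℝ) : ℝ :=
  3 + 2 * Real.cos ((Real.sqrt 3 * k.1 + k.2) / 2 + 2 * π / 3)
    + 2 * Real.cos ((Real.sqrt 3 * k.1 - k.2) / 2 - 2 * π / 3)
    + 2 * Real.cos (k.2 + 4 * π / 3)

open Complex in
lemma norm_exp_ofReal_mul_I_sub_taylor_le {x : ℝ} (hx : |x| ≤ 1) :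
    ‖cexp (x * I) - ((1 - x ^ 2 / 2 + x ^ 4 / 24 : ℝ) + (x - x ^ 3 / 6 : ℝ) * I)‖ ≤ |x| ^ 5 := by
  have hxI : ‖(x : ℂ) * I‖ = |x| := by simp
  have hsum : ∑ m ∈ Finset.range 5, ((x : ℂ) * I) ^ m / m.factorial
      = ((1 - x ^ 2 / 2 + x ^ 4 / 24 : ℝ) + (x - x ^ 3 / 6 : ℝ) * I) := by
    apply Complex.ext <;> simp [Finset.sum_range_succ, Nat.factorial, pow_succ] <;> ring
  have h := exp_bound (x := x * I) (n := 5) (by rwa [hxI]) (by norm_num)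
  rw [hsum, hxI] at h
  exact h.trans (mul_le_of_le_one_right (by positivity) (by norm_num [Nat.factorial]))

lemma abs_cos_sub_taylor_le {x : ℝ} (hx : |x| ≤ 1) :
    |cos x - (1 - x ^ 2 / 2 + x ^ 4 / 24)| ≤ |x| ^ 5 := by
  refine le_trans (le_of_eq ?_) ((Complex.abs_re_le_norm _).trans
    (norm_exp_ofReal_mul_I_sub_taylor_le hx))
  simp [Complex.exp_ofReal_mul_I_re, -Complex.ofReal_pow]

lemma abs_sin_sub_taylor_le {x : ℝ} (hx : |x| ≤ 1) :
    |sin x - (x - x ^ 3 / 6)| ≤ |x| ^ 5 := by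
  refine le_trans (le_of_eq ?_) ((Complex.abs_im_le_norm _).trans
    (norm_exp_ofReal_mul_I_sub_taylor_le hx))
  simp [Complex.exp_ofReal_mul_I_im, -Complex.ofReal_pow]

noncomputable def cosTaylorRem (x : ℝ) : ℝ := cos x - (1 - x ^ 2 / 2 + x ^ 4 / 24)

noncomputable def sinTaylorRem (x : ℝ) : ℝ := sin x - (x - x ^ 3 / 6)

lemma cosTaylorRem_isBigO : cosTaylorRem =O[𝓝 0] fun x => x ^ 5 := by
  refine IsBigO.of_bound 1 ?_
  filter_upwards [Metric.closedBall_mem_nhds (0 : ℝ) one_pos] with x hx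
  rw [Metric.mem_closedBall, dist_zero_right, Real.norm_eq_abs] at hx
  simpa [cosTaylorRem, abs_pow] using abs_cos_sub_taylor_le hx

lemma sinTaylorRem_isBigO : sinTaylorRem =O[𝓝 0] fun x => x ^ 5 := by
  refine IsBigO.of_bound 1 ?_
  filter_upwards [Metric.closedBall_mem_nhds (0 : ℝ) one_pos] with x hx
  rw [Metric.mem_closedBall, dist_zero_right, Real.norm_eq_abs] at hx
  simpa [sinTaylorRem, abs_pow] using abs_sin_sub_taylor_le hx

lemma Asymptotics.IsBigO.comp_isBigO_norm {E : Type*} [SeminormedAddCommGroup E] {f : ℝ → ℝ}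
    {n : ℕ} (hf : f =O[𝓝 0] fun x => x ^ n) {ℓ : E → ℝ} (hℓ : ℓ =O[𝓝 0] fun k => ‖k‖) :
    (fun k => f (ℓ k)) =O[𝓝 0] fun k => ‖k‖ ^ n :=
  (hf.comp_tendsto (hℓ.trans_tendsto tendsto_norm_zero)).trans (hℓ.pow n)

lemma isBigO_linear_form {l : Filter (ℝ × ℝ)} (a b : ℝ) :
    (fun k : ℝ × ℝ => a * k.1 + b * k.2) =O[l] fun k => ‖k‖ :=
  ((isBigO_fst_prod'.const_mul_left a).add (isBigO_snd_prod'.const_mul_left b)).norm_right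

namespace Real

lemma cos_two_pi_div_three : cos (2 * π / 3) = -(1 / 2) := by
  rw [show 2 * π / 3 = π - π / 3 by ring, cos_pi_sub, cos_pi_div_three]

lemma sin_two_pi_div_three : sin (2 * π / 3) = √3 / 2 := by
  rw [show 2 * π / 3 = π - π / 3 by ring, sin_pi_sub, sin_pi_div_three]

lemma cos_four_pi_div_three : cos (4 * π / 3) = -(1 / 2) := by
  rw [show 4 * π / 3 = π / 3 + π by ring, cos_add_pi, cos_pi_div_three]

lemma sin_four_pi_div_three : sin (4 * π / 3) = -(√3 / 2) := by
  rw [show 4 * π / 3 = π / 3 + π by ring, sin_add_pi, sin_pi_div_three]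

end Real

lemma phiSqDirac_eq (k : ℝ × ℝ) :
    phiSqDirac k = 3 - (cos ((√3 * k.1 + k.2) / 2) + cos ((√3 * k.1 - k.2) / 2) + cos k.2)
      - √3 * (sin ((√3 * k.1 + k.2) / 2) - sin ((√3 * k.1 - k.2) / 2) - sin k.2) := by
  rw [phiSqDirac, cos_add, cos_sub, cos_add, cos_two_pi_div_three, sin_two_pi_div_three,
    cos_four_pi_div_three, sin_four_pi_div_three]
  ring

lemma phiSqDirac_sub_taylor (k : ℝ × ℝ) :
    phiSqDirac k - (3 / 4 * (k.1 ^ 2 + k.2 ^ 2) + 3 * √3 / 8 * k.1 ^ 2 * k.2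
        - √3 / 8 * k.2 ^ 3 - 3 / 64 * (k.1 ^ 2 + k.2 ^ 2) ^ 2)
      = -(cosTaylorRem ((√3 * k.1 + k.2) / 2) + cosTaylorRem ((√3 * k.1 - k.2) / 2)
          + cosTaylorRem k.2)
        - √3 * (sinTaylorRem ((√3 * k.1 + k.2) / 2) - sinTaylorRem ((√3 * k.1 - k.2) / 2)
          - sinTaylorRem k.2) := by
  have h3 : √3 ^ 2 = 3 := sq_sqrt (by norm_num)
  rw [phiSqDirac_eq, cosTaylorRem, cosTaylorRem, cosTaylorRem, sinTaylorRem, sinTaylorRem,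
    sinTaylorRem]
  linear_combination (1/4 * k.1 ^ 2 - 1/32 * k.1 ^ 2 * k.2 ^ 2 - 1/64 * k.1 ^ 4
      + 1/8 * √3 * k.1 ^ 2 * k.2 - 1/192 * √3 ^ 2 * k.1 ^ 4) * h3

theorem stmt_17 :
    (fun k : ℝ × ℝ =>
        phiSqDirac k -
          (3 / 4 * (k.1 ^ 2 + k.2 ^ 2) + 3 * Real.sqrt 3 / 8 * k.1 ^ 2 * k.2
            - Real.sqrt 3 / 8 * k.2 ^ 3 - 3 / 64 * (k.1 ^ 2 + k.2 ^ 2) ^ 2)) =O[𝓝 0]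
      fun k : ℝ × ℝ => ‖k‖ ^ 5 := by
  have hα : (fun k : ℝ × ℝ => (√3 * k.1 + k.2) / 2) =O[𝓝 0] fun k => ‖k‖ :=
    (isBigO_linear_form (√3 / 2) (1 / 2)).congr_left fun k => by ring
  have hβ : (fun k : ℝ × ℝ => (√3 * k.1 - k.2) / 2) =O[𝓝 0] fun k => ‖k‖ :=
    (isBigO_linear_form (√3 / 2) (-1 / 2)).congr_left fun k => by ring
  have hγ : (fun k : ℝ × ℝ => k.2) =O[𝓝 0] fun k => ‖k‖ :=
    (isBigO_linear_form 0 1).congr_left fun k => by ring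
  have hcos := ((cosTaylorRem_isBigO.comp_isBigO_norm hα).add
    (cosTaylorRem_isBigO.comp_isBigO_norm hβ)).add (cosTaylorRem_isBigO.comp_isBigO_norm hγ)
  have hsin := ((sinTaylorRem_isBigO.comp_isBigO_norm hα).sub
    (sinTaylorRem_isBigO.comp_isBigO_norm hβ)).sub (sinTaylorRem_isBigO.comp_isBigO_norm hγ)
  simp_rw [phiSqDirac_sub_taylor]
  exact hcos.neg_left.sub (hsin.const_mul_left √3)
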